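/- For every integer n ≥ 4, the neighborhood polynomials of consecutive ladder graphs satisfy the recursion N(L_n, x) = N(L_{n−1}, x) + 2·x·(1+x)². -/

import Mathlib

open Classical in
/-- The neighborhood polynomial of a finite simple graph `G`, evaluated at `x`:
the generating function of the family of vertex subsets having a common neighbor. -/
noncomputable def nhdPoly {V : Type*} [Fintype V] (G : SimpleGraph V) (x : ℝ) : ℝ :=
  ∑ A ∈ Finset.univ.filter (fun A : Finset V => ∃ w : V, ∀ a ∈ A, G.Adj w a), x ^ A.card

/-!
Write `L_n` on `Fin 2 × Fin n`. A face of `𝒩(L_n)` through a last-column vertex `(c, n-1)` has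
its common neighbour at `(c, n-2)` or `(c+1, n-1)`, and both neighbourhoods lie inside the
3-set `N(c, n-2)`; so these faces are `{(c, n-1)} ∪ B` with `B` a subset of a 2-set, giving
`x(1+x)²` for each `c`, and no face contains both last-column vertices (a rung has no common
neighbour). A face avoiding the last column is already a face of `L_{n-1}`: a last-column vertex
`(c, n-1)` sees only `(c, n-2)` there, which also has the neighbour `(c+1, n-2)` in `L_{n-1}`.
-/

open Finset SimpleGraph

theorem sum_powerset_filter_mem_pow {α R : Type*} [DecidableEq α] [CommSemiring R]
    {s : Finset α} {v : α} (hv : v ∈ s) (x : R) :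
    ∑ A ∈ s.powerset.filter (v ∈ ·), x ^ #A = x * (1 + x) ^ (#s - 1) := by
  have hvt : v ∉ s.erase v := notMem_erase v s
  have hout : ∀ A ∈ (s.erase v).powerset, v ∉ A := fun A hA h => hvt (mem_powerset.mp hA h)
  rw [← insert_erase hv, sum_filter, sum_powerset_insert hvt, card_insert_of_notMem hvt,
    Nat.add_sub_cancel, add_comm 1 x, ← sum_pow_mul_eq_add_pow x 1, mul_sum,
    sum_eq_zero fun A hA => if_neg (hout A hA), zero_add]
  refine sum_congr rfl fun A hA => ?_
  rw [if_pos (mem_insert_self v A), card_insert_of_notMem (hout A hA), one_pow, mul_one, pow_succ']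

section NeighborhoodComplex

variable {V W : Type*} [Fintype V] [Fintype W]

open Classical in
noncomputable def nhdComplex (G : SimpleGraph V) : Finset (Finset V) :=
  univ.filter fun A => ∃ w, ∀ a ∈ A, G.Adj w a

theorem nhdPoly_eq_sum_nhdComplex (G : SimpleGraph V) (x : ℝ) :
    nhdPoly G x = ∑ A ∈ nhdComplex G, x ^ #A :=
  rfl

theorem mem_nhdComplex {G : SimpleGraph V} {A : Finset V} :
    A ∈ nhdComplex G ↔ ∃ w, ∀ a ∈ A, G.Adj w a := by
  simp [nhdComplex]

theorem filter_mem_nhdComplex_eq [DecidableEq V] {G : SimpleGraph V} [DecidableRel G.Adj]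
    {v w₀ : V} (hdom : ∀ w, G.Adj w v → ∀ u, G.Adj w u → G.Adj w₀ u) :
    (nhdComplex G).filter (v ∈ ·) = (G.neighborFinset w₀).powerset.filter (v ∈ ·) := by
  ext A
  simp only [mem_filter, mem_nhdComplex, mem_powerset, and_congr_left_iff]
  intro hvA
  constructor
  · rintro ⟨w, hw⟩ u hu
    exact (mem_neighborFinset _ _ _).mpr (hdom w (hw v hvA) u (hw u hu))
  · exact fun hA => ⟨w₀, fun u hu => (mem_neighborFinset _ _ _).mp (hA hu)⟩

theorem sum_filter_mem_nhdComplex [DecidableEq V] {G : SimpleGraph V} [DecidableRel G.Adj]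
    {v w₀ : V} (hv : G.Adj w₀ v) (hdom : ∀ w, G.Adj w v → ∀ u, G.Adj w u → G.Adj w₀ u)
    (x : ℝ) :
    ∑ A ∈ (nhdComplex G).filter (v ∈ ·), x ^ #A = x * (1 + x) ^ (G.degree w₀ - 1) := by
  rw [filter_mem_nhdComplex_eq hdom, sum_powerset_filter_mem_pow
    ((mem_neighborFinset _ _ _).mpr hv), card_neighborFinset_eq_degree]

theorem map_mem_nhdComplex_iff {G : SimpleGraph V} {H : SimpleGraph W} (f : G ↪g H)
    (hdom : ∀ w, ∃ w', ∀ v, H.Adj w (f v) → G.Adj w' v) {A : Finset V} :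
    A.map f.toEmbedding ∈ nhdComplex H ↔ A ∈ nhdComplex G := by
  simp only [mem_nhdComplex, forall_mem_map]
  constructor
  · rintro ⟨w, hw⟩
    obtain ⟨w', hw'⟩ := hdom w
    exact ⟨w', fun a ha => hw' a (hw a ha)⟩
  · rintro ⟨w, hw⟩
    exact ⟨f w, fun a ha => f.map_adj_iff.mpr (hw a ha)⟩

theorem sum_filter_subset_map_nhdComplex [DecidableEq W] {G : SimpleGraph V}
    {H : SimpleGraph W} (f : G ↪g H) (hdom : ∀ w, ∃ w', ∀ v, H.Adj w (f v) → G.Adj w' v)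
    (x : ℝ) :
    ∑ B ∈ (nhdComplex H).filter (· ⊆ univ.map f.toEmbedding), x ^ #B = nhdPoly G x := by
  have hfam : (nhdComplex H).filter (· ⊆ univ.map f.toEmbedding) =
      (nhdComplex G).map (mapEmbedding f.toEmbedding).toEmbedding := by
    ext B
    simp only [mem_filter, mem_map, RelEmbedding.coe_toEmbedding, mapEmbedding_apply,
      subset_map_iff, subset_univ, true_and]
    constructor
    · rintro ⟨hB, A, rfl⟩
      exact ⟨A, (map_mem_nhdComplex_iff f hdom).mp hB, rfl⟩
    · rintro ⟨A, hA, rfl⟩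
      exact ⟨(map_mem_nhdComplex_iff f hdom).mpr hA, A, rfl⟩
  rw [hfam, sum_map, nhdPoly_eq_sum_nhdComplex]
  simp

end NeighborhoodComplex

section Ladder

abbrev ladder (n : ℕ) : SimpleGraph (Fin 2 × Fin n) := pathGraph 2 □ pathGraph n

theorem ladder_adj {n : ℕ} {p q : Fin 2 × Fin n} :
    (ladder n).Adj p q ↔
      (((p.1 : ℕ) + 1 = q.1 ∨ (q.1 : ℕ) + 1 = p.1) ∧ (p.2 : ℕ) = q.2) ∨
      (((p.2 : ℕ) + 1 = q.2 ∨ (q.2 : ℕ) + 1 = p.2) ∧ (p.1 : ℕ) = q.1) := by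
  simp [boxProd_adj, pathGraph_adj, Fin.ext_iff]

instance (n : ℕ) : DecidableRel (ladder n).Adj :=
  fun _ _ => decidable_of_iff _ ladder_adj.symm

theorem degree_ladder {n : ℕ} (c : Fin 2) (i : Fin n) (h0 : 0 < (i : ℕ)) (h1 : (i : ℕ) + 1 < n) :
    (ladder n).degree (c, i) = 3 := by
  have hN : (ladder n).neighborFinset (c, i) =
      {(c + 1, i), (c, ⟨i - 1, by omega⟩), (c, ⟨i + 1, h1⟩)} := by
    ext p
    simp only [mem_neighborFinset, ladder_adj, mem_insert, mem_singleton, Prod.ext_iff,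
      Fin.ext_iff, Fin.val_add]
    omega
  rw [← card_neighborFinset_eq_degree, hN, card_eq_three]
  refine ⟨_, _, _, ?_, ?_, ?_, rfl⟩ <;>
    simp only [Ne, Prod.ext_iff, Fin.ext_iff, Fin.val_add] <;> omega

def ladderSuccEmbedding (m : ℕ) : ladder m ↪g ladder (m + 1) where
  toEmbedding := (Function.Embedding.refl _).prodMap Fin.castSuccEmb
  map_rel_iff' := by simp [boxProd_adj, pathGraph_adj]

@[simp]
theorem ladderSuccEmbedding_apply {m : ℕ} (p : Fin 2 × Fin m) :
    ladderSuccEmbedding m p = (p.1, p.2.castSucc) :=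
  rfl

theorem subset_map_ladderSuccEmbedding_iff {m : ℕ} {A : Finset (Fin 2 × Fin (m + 1))} :
    A ⊆ univ.map (ladderSuccEmbedding m).toEmbedding ↔
      ((0 : Fin 2), Fin.last m) ∉ A ∧ ((1 : Fin 2), Fin.last m) ∉ A := by
  simp only [subset_iff, mem_map, mem_univ, true_and, RelEmbedding.coe_toEmbedding,
    ladderSuccEmbedding_apply]
  constructor
  · intro h
    constructor <;> intro hlast <;> obtain ⟨a, ha⟩ := h hlast <;>
      exact Fin.castSucc_ne_last a.2 (Prod.ext_iff.mp ha).2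
  · rintro ⟨h0, h1⟩ ⟨r, j⟩ hA
    rcases Fin.eq_castSucc_or_eq_last j with ⟨j, rfl⟩ | rfl
    · exact ⟨(r, j), rfl⟩
    · fin_cases r
      exacts [absurd hA h0, absurd hA h1]

theorem ladderSuccEmbedding_dominated {m : ℕ} (hm : 1 ≤ m) (w : Fin 2 × Fin (m + 1)) :
    ∃ w', ∀ v, (ladder (m + 1)).Adj w (ladderSuccEmbedding m v) → (ladder m).Adj w' v := by
  obtain ⟨r, j⟩ := w
  rcases Fin.eq_castSucc_or_eq_last j with ⟨j, rfl⟩ | rfl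
  · exact ⟨(r, j), fun v => ((ladderSuccEmbedding m).map_adj_iff (v := (r, j))).mp⟩
  · refine ⟨(r + 1, ⟨m - 1, by omega⟩), fun v hv => ?_⟩
    have := v.2.2
    simp only [ladderSuccEmbedding_apply, ladder_adj, Fin.val_last, Fin.val_castSucc,
      Fin.val_add] at hv ⊢
    omega

theorem ladder_not_adj_of_adj_rung {n : ℕ} {w : Fin 2 × Fin n} {i : Fin n}
    (h : (ladder n).Adj w (0, i)) : ¬ (ladder n).Adj w (1, i) := by
  rw [ladder_adj] at h ⊢
  simp only [Fin.val_zero, Fin.val_one] at h ⊢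
  omega

theorem sum_filter_mem_last_nhdComplex_ladder {m : ℕ} (hm : 2 ≤ m) (c : Fin 2) (x : ℝ) :
    ∑ A ∈ (nhdComplex (ladder (m + 1))).filter ((c, Fin.last m) ∈ ·), x ^ #A =
      x * (1 + x) ^ 2 := by
  set w₀ : Fin 2 × Fin (m + 1) := (c, ⟨m - 1, by omega⟩)
  have hv : (ladder (m + 1)).Adj w₀ (c, Fin.last m) := by
    simp only [w₀, ladder_adj, Fin.val_last, and_true]
    omega
  have hdom : ∀ w, (ladder (m + 1)).Adj w (c, Fin.last m) →
      ∀ u, (ladder (m + 1)).Adj w u → (ladder (m + 1)).Adj w₀ u := by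
    intro w hw u hu
    have := u.2.2
    simp only [w₀, ladder_adj, Fin.val_last] at hw hu ⊢
    omega
  rw [sum_filter_mem_nhdComplex hv hdom,
    degree_ladder c _ (by dsimp only; omega) (by dsimp only; omega)]

end Ladder

/-- Recursion for the neighborhood polynomials of ladder graphs `L_n = P₂ □ P_n` (`n ≥ 4`):
`N(L_n, x) = N(L_{n−1}, x) + 2·x·(1+x)²`. -/
theorem nhdPoly_ladder_recursion (n : ℕ) (hn : 4 ≤ n) (x : ℝ) :
    nhdPoly (SimpleGraph.pathGraph 2 □ SimpleGraph.pathGraph n) x =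
      nhdPoly (SimpleGraph.pathGraph 2 □ SimpleGraph.pathGraph (n - 1)) x
        + 2 * x * (1 + x) ^ 2 := by
  obtain ⟨m, rfl⟩ : ∃ m, n = m + 1 := ⟨n - 1, by omega⟩
  have hlast0 := sum_filter_mem_last_nhdComplex_ladder (m := m) (by omega) 0 x
  have hlast1 := sum_filter_mem_last_nhdComplex_ladder (m := m) (by omega) 1 x
  have hrest := sum_filter_subset_map_nhdComplex (ladderSuccEmbedding m)
    (ladderSuccEmbedding_dominated (by omega)) x
  have hdisjoint : (nhdComplex (ladder (m + 1))).filter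
      (fun A => ((0 : Fin 2), Fin.last m) ∉ A ∧ ((1 : Fin 2), Fin.last m) ∈ A) =
      (nhdComplex (ladder (m + 1))).filter (((1 : Fin 2), Fin.last m) ∈ ·) := by
    refine filter_congr fun A hA => ⟨And.right, fun h1 => ⟨fun h0 => ?_, h1⟩⟩
    obtain ⟨w, hw⟩ := mem_nhdComplex.mp hA
    exact ladder_not_adj_of_adj_rung (hw _ h0) (hw _ h1)
  rw [Nat.add_sub_cancel, nhdPoly_eq_sum_nhdComplex,
    ← sum_filter_add_sum_filter_not _ (((0 : Fin 2), Fin.last m) ∈ ·), hlast0,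
    ← sum_filter_add_sum_filter_not _ (((1 : Fin 2), Fin.last m) ∈ ·), filter_filter,
    filter_filter, hdisjoint, hlast1,
    filter_congr fun A _ => subset_map_ladderSuccEmbedding_iff.symm, hrest]
  ring
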